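/- In the Q5 kissing configuration, exactly 20 of the 40 points v satisfy -v ∈ Q5 (namely the 20 points with coordinate sum 0), while the remaining 20 points do not have their antipode in the configuration. -/
import Mathlib


/-- The D5 root system: vectors in ℝ^5 with exactly two nonzero coordinates, each ±1. -/
def D5 : Set (Fin 5 → ℝ) :=
  {v | (∀ i, v i = -1 ∨ v i = 0 ∨ v i = 1) ∧
    (Finset.univ.filter fun i => v i ≠ 0).card = 2}

/-- Szöllősi's configuration `Q5`. -/
def Q5 : Set (Fin 5 → ℝ) :=
  {v | v ∈ D5 ∧ ∑ i, v i ≤ 0} ∪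
  {v | ∃ u ∈ D5, (∑ i, u i) = 2 ∧ v = fun i => -u i + 4/5}

noncomputable def vA (i j : Fin 5) : Fin 5 → ℝ :=
  fun k => if k = i then 1 else if k = j then -1 else 0
noncomputable def vB (i j : Fin 5) : Fin 5 → ℝ :=
  fun k => if k = i ∨ k = j then -1 else 0
noncomputable def vC (i j : Fin 5) : Fin 5 → ℝ :=
  fun k => if k = i ∨ k = j then -(1/5) else 4/5

lemma sum_of_supp {v : Fin 5 → ℝ} {i j : Fin 5} (hij : i ≠ j)
    (h0 : ∀ k, k ≠ i → k ≠ j → v k = 0) : ∑ k, v k = v i + v j := by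
  rw [← Finset.sum_pair hij]
  refine (Finset.sum_subset (Finset.subset_univ _) ?_).symm
  intro x _ hx
  simp only [Finset.mem_insert, Finset.mem_singleton, not_or] at hx
  exact h0 x hx.1 hx.2

lemma D5_iff {v : Fin 5 → ℝ} : v ∈ D5 ↔ ∃ i j : Fin 5, i ≠ j ∧
    (v i = -1 ∨ v i = 1) ∧ (v j = -1 ∨ v j = 1) ∧ ∀ k, k ≠ i → k ≠ j → v k = 0 := by
  constructor
  · rintro ⟨hval, hcard⟩
    obtain ⟨a, b, hab, hfil⟩ := Finset.card_eq_two.mp hcard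
    have ha : v a ≠ 0 := by
      have : a ∈ Finset.univ.filter fun i => v i ≠ 0 := by rw [hfil]; simp
      simpa using this
    have hb : v b ≠ 0 := by
      have : b ∈ Finset.univ.filter fun i => v i ≠ 0 := by rw [hfil]; simp
      simpa using this
    refine ⟨a, b, hab, ?_, ?_, ?_⟩
    · rcases hval a with h|h|h <;> tauto
    · rcases hval b with h|h|h <;> tauto
    · intro k hk1 hk2
      by_contra hk
      have : k ∈ Finset.univ.filter fun i => v i ≠ 0 := by simpa using hk
      rw [hfil] at this
      simp only [Finset.mem_insert, Finset.mem_singleton] at this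
      tauto
  · rintro ⟨i, j, hij, hi, hj, h0⟩
    constructor
    · intro k
      by_cases h1 : k = i
      · subst h1; tauto
      by_cases h2 : k = j
      · subst h2; tauto
      · right; left; exact h0 k h1 h2
    · have heq : (Finset.univ.filter fun k => v k ≠ 0) = {i, j} := by
        ext k
        simp only [Finset.mem_filter, Finset.mem_univ, true_and, Finset.mem_insert,
          Finset.mem_singleton]
        constructor
        · intro hk
          by_contra hc
          push_neg at hc
          exact hk (h0 k hc.1 hc.2)
        · rintro (rfl|rfl)
          · rcases hi with h|h <;> rw [h] <;> norm_num
          · rcases hj with h|h <;> rw [h] <;> norm_num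
      rw [heq, Finset.card_pair hij]

/-- coordinate values of Q5 members -/
lemma Q5_coord {v : Fin 5 → ℝ} (hv : v ∈ Q5) (k : Fin 5) :
    v k = -1 ∨ v k = 0 ∨ v k = 1 ∨ v k = -(1/5) ∨ v k = 4/5 ∨ v k = 9/5 := by
  rcases hv with ⟨⟨hval, _⟩, _⟩ | ⟨u, ⟨huval, _⟩, _, rfl⟩
  · rcases hval k with h|h|h <;> tauto
  · rcases huval k with h|h|h <;> simp [h] <;> norm_num

lemma sum_neg (v : Fin 5 → ℝ) : ∑ i, (-v) i = -∑ i, v i := by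
  simp [Finset.sum_neg_distrib]

lemma sum_refl {u : Fin 5 → ℝ} (hu : ∑ i, u i = 2) :
    ∑ i, (-u i + 4/5) = 2 := by
  rw [Finset.sum_add_distrib, Finset.sum_neg_distrib, hu]
  simp
  norm_num

lemma vA_sum {i j : Fin 5} (hij : i ≠ j) : ∑ k, vA i j k = 0 := by
  rw [sum_of_supp hij (fun k h1 h2 => by simp [vA, h1, h2])]
  simp [vA, hij.symm]

lemma vA_D5 {i j : Fin 5} (hij : i ≠ j) : vA i j ∈ D5 := by
  rw [D5_iff]
  exact ⟨i, j, hij, by simp [vA], by simp [vA, hij.symm], fun k h1 h2 => by simp [vA, h1, h2]⟩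

lemma vA_Q5 {i j : Fin 5} (hij : i ≠ j) : vA i j ∈ Q5 :=
  Or.inl ⟨vA_D5 hij, le_of_eq (vA_sum hij)⟩

lemma neg_vA {i j : Fin 5} (hij : i ≠ j) : -vA i j = vA j i := by
  funext k
  simp only [Pi.neg_apply, vA]
  by_cases h1 : k = i
  · subst h1; simp [hij]
  · by_cases h2 : k = j <;> simp [h1, h2, Ne.symm hij]

lemma vB_sum {i j : Fin 5} (hij : i ≠ j) : ∑ k, vB i j k = -2 := by
  rw [sum_of_supp hij (fun k h1 h2 => by simp [vB, h1, h2])]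
  simp [vB]
  norm_num

lemma vB_D5 {i j : Fin 5} (hij : i ≠ j) : vB i j ∈ D5 := by
  rw [D5_iff]
  exact ⟨i, j, hij, by simp [vB], by simp [vB], fun k h1 h2 => by simp [vB, h1, h2]⟩

lemma vB_Q5 {i j : Fin 5} (hij : i ≠ j) : vB i j ∈ Q5 :=
  Or.inl ⟨vB_D5 hij, by rw [vB_sum hij]; norm_num⟩

/-- the "two ones" D5 vector -/
noncomputable def uP (i j : Fin 5) : Fin 5 → ℝ := fun k => if k = i ∨ k = j then 1 else 0

lemma uP_D5 {i j : Fin 5} (hij : i ≠ j) : uP i j ∈ D5 := by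
  rw [D5_iff]
  exact ⟨i, j, hij, by simp [uP], by simp [uP], fun k h1 h2 => by simp [uP, h1, h2]⟩

lemma uP_sum {i j : Fin 5} (hij : i ≠ j) : ∑ k, uP i j k = 2 := by
  rw [sum_of_supp hij (fun k h1 h2 => by simp [uP, h1, h2])]
  simp [uP]
  norm_num

lemma vC_Q5 {i j : Fin 5} (hij : i ≠ j) : vC i j ∈ Q5 := by
  refine Or.inr ⟨uP i j, uP_D5 hij, uP_sum hij, ?_⟩
  funext k
  by_cases h : k = i ∨ k = j <;> simp [vC, uP, h] <;> norm_num

/-- structure of D5 members with sum 2: two coordinates 1 -/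
lemma D5_sum2 {u : Fin 5 → ℝ} (hu : u ∈ D5) (hs : ∑ i, u i = 2) :
    ∃ i j : Fin 5, i ≠ j ∧ u = uP i j := by
  obtain ⟨i, j, hij, hi, hj, h0⟩ := D5_iff.mp hu
  rw [sum_of_supp hij h0] at hs
  have hi1 : u i = 1 := by rcases hi with h|h <;> rcases hj with h'|h' <;> rw [h, h'] at hs <;> first | exact h | linarith
  have hj1 : u j = 1 := by rcases hi with h|h <;> rcases hj with h'|h' <;> rw [h, h'] at hs <;> first | exact h' | linarith
  refine ⟨i, j, hij, funext fun k => ?_⟩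
  by_cases h1 : k = i
  · subst h1; simp [uP, hi1]
  by_cases h2 : k = j
  · subst h2; simp [uP, hj1]
  · simp [uP, h1, h2, h0 k h1 h2]

/-- Main classification: Q5 ∩ (sum = 0) -/
lemma classA {v : Fin 5 → ℝ} :
    (v ∈ Q5 ∧ ∑ i, v i = 0) ↔ ∃ i j : Fin 5, i ≠ j ∧ v = vA i j := by
  constructor
  · rintro ⟨hv, hs⟩
    rcases hv with ⟨hD, _⟩ | ⟨u, hu, hu2, rfl⟩
    · obtain ⟨i, j, hij, hi, hj, h0⟩ := D5_iff.mp hD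
      rw [sum_of_supp hij h0] at hs
      rcases hi with h|h <;> rcases hj with h'|h'
      · rw [h, h'] at hs; norm_num at hs
      · refine ⟨j, i, hij.symm, funext fun k => ?_⟩
        by_cases h1 : k = i
        · subst h1; simp [vA, hij, h]
        by_cases h2 : k = j
        · subst h2; simp [vA, h']
        · simp [vA, h1, h2, h0 k h1 h2]
      · refine ⟨i, j, hij, funext fun k => ?_⟩
        by_cases h1 : k = i
        · subst h1; simp [vA, h]
        by_cases h2 : k = j
        · subst h2; simp [vA, hij.symm, h']
        · simp [vA, h1, h2, h0 k h1 h2]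
      · rw [h, h'] at hs; norm_num at hs
    · rw [sum_refl hu2] at hs; norm_num at hs
  · rintro ⟨i, j, hij, rfl⟩
    exact ⟨vA_Q5 hij, vA_sum hij⟩

/-- vectors with a coordinate outside all possible Q5 values are not in Q5 -/
lemma not_Q5_of_coord {v : Fin 5 → ℝ} (k : Fin 5)
    (h : v k ≠ -1 ∧ v k ≠ 0 ∧ v k ≠ 1 ∧ v k ≠ -(1/5) ∧ v k ≠ 4/5 ∧ v k ≠ 9/5) :
    v ∉ Q5 := by
  intro hv
  rcases Q5_coord hv k with h'|h'|h'|h'|h'|h' <;> tauto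

lemma neg_vB_not_Q5 {i j : Fin 5} (hij : i ≠ j) : -vB i j ∉ Q5 := by
  rintro (⟨_, hs⟩ | hB)
  · rw [sum_neg, vB_sum hij] at hs; norm_num at hs
  · rcases hB with ⟨u, ⟨huval, _⟩, _, heq⟩
    have := congrFun heq i
    simp only [Pi.neg_apply, vB, if_pos (Or.inl rfl)] at this
    rcases huval i with h|h|h <;> rw [h] at this <;> norm_num at this

lemma neg_vC_not_Q5 {i j : Fin 5} (hij : i ≠ j) : -vC i j ∉ Q5 := by
  apply not_Q5_of_coord i
  simp only [Pi.neg_apply, vC, if_pos (Or.inl rfl)]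
  norm_num

/-- first equality -/
lemma eq1 : {v : Fin 5 → ℝ | v ∈ Q5 ∧ -v ∈ Q5} = {v | v ∈ Q5 ∧ ∑ i, v i = 0} := by
  ext v
  simp only [Set.mem_setOf_eq]
  constructor
  · rintro ⟨hv, hnv⟩
    refine ⟨hv, ?_⟩
    rcases hv with ⟨hD, hs⟩ | ⟨u, hu, hu2, rfl⟩
    · obtain ⟨i, j, hij, hi, hj, h0⟩ := D5_iff.mp hD
      have hsum : ∑ k, v k = v i + v j := sum_of_supp hij h0
      rcases hi with h|h <;> rcases hj with h'|h'
      · -- both -1 : v = vB i j, -v ∉ Q5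
        exfalso
        have hveq : v = vB i j := funext fun k => by
          by_cases h1 : k = i
          · subst h1; simp [vB, h]
          by_cases h2 : k = j
          · subst h2; simp [vB, h']
          · simp [vB, h1, h2, h0 k h1 h2]
        rw [hveq] at hnv
        exact neg_vB_not_Q5 hij hnv
      · rw [hsum, h, h']; ring
      · rw [hsum, h, h']; ring
      · rw [hsum, h, h'] at hs; norm_num at hs
    · exfalso
      obtain ⟨i, j, hij, rfl⟩ := D5_sum2 hu hu2
      have hveq : (fun k => -uP i j k + 4/5) = vC i j := funext fun k => by
        by_cases h : k = i ∨ k = j <;> simp [vC, uP, h] <;> norm_num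
      rw [hveq] at hnv
      exact neg_vC_not_Q5 hij hnv
  · rintro ⟨hv, hs⟩
    obtain ⟨i, j, hij, rfl⟩ := classA.mp ⟨hv, hs⟩
    rw [neg_vA hij]
    exact ⟨hv, vA_Q5 hij.symm⟩

/-- classification of antipode-free points -/
lemma classB {v : Fin 5 → ℝ} :
    (v ∈ Q5 ∧ -v ∉ Q5) ↔ ∃ i j : Fin 5, i < j ∧ (v = vB i j ∨ v = vC i j) := by
  constructor
  · rintro ⟨hv, hnv⟩
    rcases hv with ⟨hD, hs⟩ | ⟨u, hu, hu2, rfl⟩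
    · obtain ⟨i, j, hij, hi, hj, h0⟩ := D5_iff.mp hD
      have hsum : ∑ k, v k = v i + v j := sum_of_supp hij h0
      rcases hi with h|h <;> rcases hj with h'|h'
      · -- both -1 : v = vB
        have hveq : v = vB i j := funext fun k => by
          by_cases h1 : k = i
          · subst h1; simp [vB, h]
          by_cases h2 : k = j
          · subst h2; simp [vB, h']
          · simp [vB, h1, h2, h0 k h1 h2]
        have hsymm : vB i j = vB j i := funext fun k => by simp [vB, or_comm]
        rcases lt_or_gt_of_ne hij with hlt | hlt
        · exact ⟨i, j, hlt, Or.inl hveq⟩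
        · exact ⟨j, i, hlt, Or.inl (hveq.trans hsymm)⟩
      · -- sum zero, contradiction with hnv
        exfalso
        have : ∑ k, v k = 0 := by rw [hsum, h, h']; ring
        obtain ⟨i', j', hij', rfl⟩ := classA.mp ⟨Or.inl ⟨hD, hs⟩, this⟩
        rw [neg_vA hij'] at hnv
        exact hnv (vA_Q5 hij'.symm)
      · exfalso
        have : ∑ k, v k = 0 := by rw [hsum, h, h']; ring
        obtain ⟨i', j', hij', rfl⟩ := classA.mp ⟨Or.inl ⟨hD, hs⟩, this⟩
        rw [neg_vA hij'] at hnv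
        exact hnv (vA_Q5 hij'.symm)
      · rw [hsum, h, h'] at hs; norm_num at hs
    · obtain ⟨i, j, hij, rfl⟩ := D5_sum2 hu hu2
      have hveq : (fun k => -uP i j k + 4/5) = vC i j := funext fun k => by
        by_cases h : k = i ∨ k = j <;> simp [vC, uP, h] <;> norm_num
      have hsymm : vC i j = vC j i := funext fun k => by simp [vC, or_comm]
      rcases lt_or_gt_of_ne hij with hlt | hlt
      · exact ⟨i, j, hlt, Or.inr hveq⟩
      · exact ⟨j, i, hlt, Or.inr (hveq.trans hsymm)⟩
  · rintro ⟨i, j, hij, (rfl|rfl)⟩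
    · exact ⟨vB_Q5 hij.ne, neg_vB_not_Q5 hij.ne⟩
    · exact ⟨vC_Q5 hij.ne, neg_vC_not_Q5 hij.ne⟩

lemma vA_inj {i j i' j' : Fin 5} (h1 : i ≠ j) (h2 : i' ≠ j')
    (he : vA i j = vA i' j') : i = i' ∧ j = j' := by
  have ei : (1:ℝ) = if i = i' then 1 else if i = j' then -1 else 0 := by
    simpa [vA] using congrFun he i
  have ej : (-1:ℝ) = if j = i' then 1 else if j = j' then -1 else 0 := by
    simpa [vA, Ne.symm h1] using congrFun he j
  have hii : i = i' := by
    by_contra hne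
    rw [if_neg hne] at ei
    split_ifs at ei <;> norm_num at ei
  subst hii
  refine ⟨rfl, ?_⟩
  by_contra hne
  rw [if_neg (Ne.symm h1), if_neg hne] at ej
  norm_num at ej

lemma pair_order {i j i' j' : Fin 5} (hij : i < j) (h' : i' < j')
    (h1 : i = i' ∨ i = j') (h2 : j = i' ∨ j = j') (h3 : i' = i ∨ i' = j) :
    i = i' ∧ j = j' := by
  rcases h1 with rfl|rfl
  · rcases h2 with rfl|rfl
    · exact absurd hij (lt_irrefl _)
    · exact ⟨rfl, rfl⟩
  · rcases h3 with rfl|rfl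
    · exact absurd h' (lt_irrefl _)
    · exact absurd (hij.trans h') (lt_irrefl _)

noncomputable def hFun : (Fin 5 × Fin 5) × Bool → (Fin 5 → ℝ) :=
  fun x => if x.2 then vC x.1.1 x.1.2 else vB x.1.1 x.1.2

lemma vB_ne_vC {i j i' j' : Fin 5} : vB i j ≠ vC i' j' := by
  intro he
  have := congrFun he i
  simp only [vB, vC, if_pos (Or.inl rfl)] at this
  split_ifs at this <;> norm_num at this

lemma vB_inj {i j i' j' : Fin 5} (hij : i < j) (h' : i' < j')
    (he : vB i j = vB i' j') : i = i' ∧ j = j' := by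
  have key : ∀ a b : Fin 5, (vB a b) a = -1 ∧ (vB a b) b = -1 := by
    intro a b; constructor <;> simp [vB]
  have mem : ∀ a, (vB i' j') a = -1 → a = i' ∨ a = j' := by
    intro a ha
    by_contra hc
    push_neg at hc
    simp [vB, hc.1, hc.2] at ha
  have mem' : ∀ a, (vB i j) a = -1 → a = i ∨ a = j := by
    intro a ha
    by_contra hc
    push_neg at hc
    simp [vB, hc.1, hc.2] at ha
  exact pair_order hij h' (mem i (he ▸ (key i j).1)) (mem j (he ▸ (key i j).2))
    (mem' i' (he.symm ▸ (key i' j').1))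

lemma vC_inj {i j i' j' : Fin 5} (hij : i < j) (h' : i' < j')
    (he : vC i j = vC i' j') : i = i' ∧ j = j' := by
  have key : ∀ a b : Fin 5, (vC a b) a = -(1/5) ∧ (vC a b) b = -(1/5) := by
    intro a b; constructor <;> simp [vC]
  have mem : ∀ a, (vC i' j') a = -(1/5) → a = i' ∨ a = j' := by
    intro a ha
    by_contra hc
    push_neg at hc
    simp [vC, hc.1, hc.2] at ha
    norm_num at ha
  have mem' : ∀ a, (vC i j) a = -(1/5) → a = i ∨ a = j := by
    intro a ha
    by_contra hc
    push_neg at hc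
    simp [vC, hc.1, hc.2] at ha
    norm_num at ha
  exact pair_order hij h' (mem i (he ▸ (key i j).1)) (mem j (he ▸ (key i j).2))
    (mem' i' (he.symm ▸ (key i' j').1))

theorem stmt10 :
    {v | v ∈ Q5 ∧ -v ∈ Q5} = {v | v ∈ Q5 ∧ ∑ i, v i = 0} ∧
    Set.ncard {v | v ∈ Q5 ∧ -v ∈ Q5} = 20 ∧
    Set.ncard {v | v ∈ Q5 ∧ -v ∉ Q5} = 20 := by
  refine ⟨eq1, ?_, ?_⟩
  · rw [eq1]
    have hset : {v : Fin 5 → ℝ | v ∈ Q5 ∧ ∑ i, v i = 0} =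
        ↑(Finset.image (fun p : Fin 5 × Fin 5 => vA p.1 p.2) Finset.univ.offDiag) := by
      ext v
      simp only [Set.mem_setOf_eq, Finset.coe_image, Set.mem_image, Finset.mem_coe,
        Finset.mem_offDiag, Finset.mem_univ, true_and]
      rw [classA]
      constructor
      · rintro ⟨i, j, hij, rfl⟩; exact ⟨(i, j), hij, rfl⟩
      · rintro ⟨⟨i, j⟩, hij, rfl⟩; exact ⟨i, j, hij, rfl⟩
    rw [hset, Set.ncard_coe_finset]
    rw [Finset.card_image_of_injOn]
    · simp [Finset.offDiag_card]
    · rintro ⟨i, j⟩ hij ⟨i', j'⟩ hij' he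
      simp only [Finset.mem_coe, Finset.mem_offDiag, Finset.mem_univ, true_and] at hij hij'
      obtain ⟨h1, h2⟩ := vA_inj hij hij' he
      simp [h1, h2]
  · have hset : {v : Fin 5 → ℝ | v ∈ Q5 ∧ -v ∉ Q5} =
        ↑(Finset.image hFun
          ((Finset.univ.filter fun p : Fin 5 × Fin 5 => p.1 < p.2) ×ˢ Finset.univ)) := by
      ext v
      simp only [Set.mem_setOf_eq, Finset.coe_image, Set.mem_image, Finset.mem_coe,
        Finset.mem_product, Finset.mem_filter, Finset.mem_univ, true_and, and_true]
      rw [classB]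
      constructor
      · rintro ⟨i, j, hij, (rfl|rfl)⟩
        · exact ⟨((i, j), false), hij, rfl⟩
        · exact ⟨((i, j), true), hij, rfl⟩
      · rintro ⟨⟨⟨i, j⟩, b⟩, hij, rfl⟩
        cases b
        · exact ⟨i, j, hij, Or.inl rfl⟩
        · exact ⟨i, j, hij, Or.inr rfl⟩
    rw [hset, Set.ncard_coe_finset]
    rw [Finset.card_image_of_injOn]
    · rw [Finset.card_product]
      rw [show (Finset.univ.filter fun p : Fin 5 × Fin 5 => p.1 < p.2).card = 10 from by decide]
      simp
    · rintro ⟨⟨i, j⟩, b⟩ hij ⟨⟨i', j'⟩, b'⟩ hij' he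
      simp only [Finset.mem_coe, Finset.mem_product, Finset.mem_filter, Finset.mem_univ,
        true_and, and_true] at hij hij'
      simp only [hFun] at he
      cases b <;> cases b' <;> simp only [if_true, if_false, Bool.false_eq_true,
        cond_false, cond_true, ite_true, ite_false] at he
      · obtain ⟨h1, h2⟩ := vB_inj hij hij' he
        simp [h1, h2]
      · exact absurd he vB_ne_vC
      · exact absurd he.symm vB_ne_vC
      · obtain ⟨h1, h2⟩ := vC_inj hij hij' he
        simp [h1, h2]
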